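/- Theorem 2 (concrete form): Let α, β ∈ ℝ with α ≠ 0 and β ≠ 0, and let Q(x,y) = α f₁(x,y) f₂(x,y) + β h(x,y)², a nondegenerate member of the pencil 𝔽. If the discriminant of Q is ≥ 0 (so the conic Q = 0 is a hyperbola or a parabola), then every point P = (x, y) with Q(x, y) = 0 satisfies dist(P, A) ≥ |y|; that is, every point of such a conic is on or strictly outside the parabola with focus A and directrix BC, so the circle centered at P of radius dist(P, A) meets the line BC. -/
import Mathlib


/-- Affine linear form vanishing exactly on the perpendicular bisector of `AB`
(`B = (0,0)`, `A = (x_A, y_A)`, `c = |AB|`). -/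
noncomputable def f1 (xA yA c x y : ℝ) : ℝ := 2*xA*x + 2*yA*y - c^2

/-- Affine linear form vanishing exactly on the perpendicular bisector of `AC`
(`C = (1,0)`). -/
noncomputable def f2 (xA yA c x y : ℝ) : ℝ := 2*(1 - xA)*x - 2*yA*y + c^2 - 1

/-- Affine linear form vanishing exactly on the line `ZV`. -/
noncomputable def hZV (yA b c x y : ℝ) : ℝ := (b^2 - c^2)*x - 2*yA*y + c^2

/-- Theorem 2 (concrete form): if `Q = α f₁ f₂ + β h²` is a nondegenerate member of the
pencil `𝔽` whose discriminant (of its degree-2 part) is `≥ 0` (a hyperbola or parabola),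
then every point of the conic `Q = 0` satisfies `dist(P, A) ≥ |y|`, i.e. lies on or
outside the parabola with focus `A` and directrix the line `BC`; hence the circle around
such a point through `A` meets the line `BC`. -/
theorem statement6 (xA yA : ℝ) (hyA : yA ≠ 0)
    (b c : ℝ) (hb : b = Real.sqrt ((xA - 1)^2 + yA^2))
    (hc : c = Real.sqrt (xA^2 + yA^2)) (hbc : b ≠ c)
    (α β : ℝ) (hα : α ≠ 0) (hβ : β ≠ 0)
    (Q : ℝ → ℝ → ℝ)
    (hQ : ∀ x y : ℝ, Q x y = α * (f1 xA yA c x y * f2 xA yA c x y) + β * (hZV yA b c x y)^2)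
    (A2 B2 C2 D2 E2 F2 : ℝ)
    (hcoef : ∀ x y : ℝ, Q x y = A2*x^2 + B2*(x*y) + C2*y^2 + D2*x + E2*y + F2)
    (hdisc : B2^2 - 4*A2*C2 ≥ 0) :
    ∀ x y : ℝ, Q x y = 0 → Real.sqrt ((x - xA)^2 + (y - yA)^2) ≥ |y| := by
  have hb2 : b^2 = (xA - 1)^2 + yA^2 := by
    rw [hb]; exact Real.sq_sqrt (by positivity)
  have hc2 : c^2 = xA^2 + yA^2 := by
    rw [hc]; exact Real.sq_sqrt (by positivity)
  have E : ∀ x y : ℝ, A2*x^2 + B2*(x*y) + C2*y^2 + D2*x + E2*y + F2 =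
      α * ((2*xA*x + 2*yA*y - (xA^2+yA^2)) * (2*(1-xA)*x - 2*yA*y + (xA^2+yA^2) - 1))
      + β * ((1 - 2*xA)*x - 2*yA*y + (xA^2+yA^2))^2 := by
    intro x y
    rw [← hcoef x y, hQ x y]
    simp only [f1, f2, hZV]
    rw [hb2, hc2]
    ring
  have hA2 : A2 = α + (β - α) * (1 - 2*xA)^2 := by
    linear_combination (E 1 0)/2 + (E (-1) 0)/2 - E 0 0
  have hC2 : C2 = (β - α) * (2*yA)^2 := by
    linear_combination (E 0 1)/2 + (E 0 (-1))/2 - E 0 0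
  have hB2 : B2 = -((β - α) * 2 * (1 - 2*xA) * (2*yA)) := by
    linear_combination (E 1 1)/2 + (E (-1) (-1))/2 - E 0 0 - hA2 - hC2
  have hyA2 : (0:ℝ) < yA^2 := by positivity
  have hd : B2^2 - 4*A2*C2 = -16 * (α * (β - α)) * yA^2 := by
    rw [hA2, hB2, hC2]; ring
  have key : α * (β - α) ≤ 0 := by nlinarith [hdisc, hd, hyA2]
  intro x y hxy
  -- g := (x - xA)^2 + yA^2 - 2*yA*y ≥ 0
  have hQxy : α * ((2*xA*x + 2*yA*y - (xA^2+yA^2)) * (2*(1-xA)*x - 2*yA*y + (xA^2+yA^2) - 1))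
      + β * ((1 - 2*xA)*x - 2*yA*y + (xA^2+yA^2))^2 = 0 := by
    rw [← E x y, ← hcoef x y]; exact hxy
  have hg : (x - xA)^2 + yA^2 - 2*yA*y ≥ 0 := by
    have h1 : α^2 * ((x - xA)^2 + yA^2 - 2*yA*y)
        = α * (α - β) * ((1 - 2*xA)*x - 2*yA*y + (xA^2+yA^2))^2 := by
      linear_combination α * hQxy
    have h2 : α * (α - β) ≥ 0 := by linarith [key]
    have h3 : ((1 - 2*xA)*x - 2*yA*y + (xA^2+yA^2))^2 ≥ 0 := sq_nonneg _
    have h4 : (0:ℝ) < α^2 := by positivity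
    have h5 := mul_nonneg h2 h3
    rw [← h1] at h5
    exact nonneg_of_mul_nonneg_right h5 h4
  have hsq : y^2 ≤ (x - xA)^2 + (y - yA)^2 := by
    have h6 : (x - xA)^2 + (y - yA)^2 - y^2 = (x - xA)^2 + yA^2 - 2*yA*y := by ring
    linarith [hg, h6]
  calc Real.sqrt ((x - xA)^2 + (y - yA)^2) ≥ Real.sqrt (y^2) := Real.sqrt_le_sqrt hsq
    _ = |y| := Real.sqrt_sq_eq_abs y
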